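/- (Theorem 2, single cell) Let n, l be positive natural numbers, A an n×n real matrix, B an n×1 real matrix, K = [k₁, …, k_n] a 1×n real matrix, D an n×l real matrix. Let φ : ℝ → ℝ be an odd function, let 0 ≤ ρ₀ ≤ ρ₁, τ > 0, χ > 0, γ > 0, f̄ ≥ 0, and let P be a symmetric n×n real matrix with P − γI positive definite, such that for ρ ∈ {ρ₀, ρ₁} the block matrix [[(A+ρBK)ᵀP + P(A+ρBK) + τP, PD], [DᵀP, −χI_l]] is negative definite. Let f : ℝ → ℝˡ satisfy |f(t)|² ≤ f̄ for all t ≥ 0, and let x : ℝ → ℝⁿ be differentiable with x′(t) = A x(t) + B·φ(Σ_{j=1}^n k_j x_j(t)) + D f(t) for all t ≥ 0. Assume that for all t ≥ 0, writing w(t) = Σ_{j=1}^n k_j x_j(t), one has ρ₀·w(t)² ≤ φ(w(t))·w(t) ≤ ρ₁·w(t)². Then V(t) = x(t)ᵀPx(t) satisfies V(t) ≤ χf̄/τ + (‖P‖·|x(0)|² + χf̄/τ)·e^{−τt} for all t ≥ 0, and limsup_{t→∞} |x(t)| ≤ √(χ f̄/(γτ)). -/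

import Mathlib

/-!
By the sector condition, `φ(Kx) = ρ(t) Kx` with `ρ(t) ∈ [ρ₀, ρ₁]`, so along the trajectory
`ẋ = (A + ρ(t) BK) x + D f`. The LMI matrix is affine in `ρ`, hence negative definite for every
`ρ` between the two vertices; evaluated at `(x, f)` its quadratic form is
`V̇ + τV - χ|f|²`, so `V̇ + τV ≤ χ f̄`. Grönwall's inequality gives the exponential bound on
`V`, with `V(0) ≤ ‖P‖ |x(0)|²`, and `γ|x|² ≤ V` turns its limit `χ f̄ / τ` into the bound
on `limsup |x|`.
-/

open Matrix Filter

def NegDefQF {m : Type*} [Fintype m] (M : Matrix m m ℝ) : Prop :=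
  ∀ z : m → ℝ, z ≠ 0 → z ⬝ᵥ M *ᵥ z < 0

noncomputable def enorm {n : ℕ} (v : Fin n → ℝ) : ℝ :=
  Real.sqrt (∑ i, v i ^ 2)

noncomputable def opNorm {n : ℕ} (P : Matrix (Fin n) (Fin n) ℝ) : ℝ :=
  ‖LinearMap.toContinuousLinearMap (Matrix.toEuclideanLin P)‖

open Real Set

theorem HasDerivAt.dotProduct {ι : Type*} [Fintype ι] {x y : ℝ → ι → ℝ} {x' y' : ι → ℝ}
    {t : ℝ} (hx : HasDerivAt x x' t) (hy : HasDerivAt y y' t) :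
    HasDerivAt (fun s => x s ⬝ᵥ y s) (x' ⬝ᵥ y t + x t ⬝ᵥ y') t := by
  rw [hasDerivAt_pi] at hx hy
  simpa only [_root_.dotProduct, Finset.sum_add_distrib] using
    HasDerivAt.fun_sum (u := Finset.univ) fun i _ => (hx i).fun_mul (hy i)

theorem HasDerivAt.mulVec {m ι : Type*} [Fintype m] [Fintype ι] (M : Matrix m ι ℝ)
    {x : ℝ → ι → ℝ} {x' : ι → ℝ} {t : ℝ} (hx : HasDerivAt x x' t) :
    HasDerivAt (fun s => M *ᵥ x s) (M *ᵥ x') t :=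
  M.mulVecLin.toContinuousLinearMap.hasFDerivAt.comp_hasDerivAt t hx

theorem le_of_hasDerivAt_add_mul_le {V V' : ℝ → ℝ} {τ c : ℝ} (hτ : τ ≠ 0)
    (hV : ∀ t ≥ (0 : ℝ), HasDerivAt V (V' t) t) (hdiss : ∀ t ≥ (0 : ℝ), V' t + τ * V t ≤ c)
    (t : ℝ) (ht : 0 ≤ t) : V t ≤ c / τ + (V 0 - c / τ) * exp (-τ * t) := by
  have hgronwall := le_gronwallBound_of_liminf_deriv_right_le (K := -τ) (ε := c) (b := t)
    (fun s hs => (hV s hs.1).continuousAt.continuousWithinAt)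
    (fun s hs _ hr => (hV s hs.1).hasDerivWithinAt.liminf_right_slope_le hr) le_rfl
    (fun s hs => by linarith [hdiss s hs.1]) t ⟨ht, le_rfl⟩
  rw [gronwallBound_of_K_ne_0 (neg_ne_zero.2 hτ), sub_zero] at hgronwall
  convert hgronwall using 1
  field_simp
  ring

theorem enorm_eq_norm_toLp {n : ℕ} (v : Fin n → ℝ) :
    _root_.enorm v = ‖WithLp.toLp 2 v‖ := by
  simp only [_root_.enorm, EuclideanSpace.norm_eq, Real.norm_eq_abs, sq_abs]

theorem enorm_sq {n : ℕ} (v : Fin n → ℝ) : _root_.enorm v ^ 2 = v ⬝ᵥ v := by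
  rw [_root_.enorm, sq_sqrt (by positivity)]
  simp only [_root_.dotProduct, sq]

theorem dotProduct_mulVec_le_opNorm_mul_enorm_sq {n : ℕ} (P : Matrix (Fin n) (Fin n) ℝ)
    (v : Fin n → ℝ) : v ⬝ᵥ P *ᵥ v ≤ opNorm P * _root_.enorm v ^ 2 := by
  set T := LinearMap.toContinuousLinearMap (Matrix.toEuclideanLin P)
  have hinner : v ⬝ᵥ P *ᵥ v = inner ℝ (WithLp.toLp 2 v) (T (WithLp.toLp 2 v)) := by
    simp [T, _root_.dotProduct, PiLp.inner_apply, mul_comm]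
  rw [hinner, enorm_eq_norm_toLp]
  calc _ ≤ ‖WithLp.toLp 2 v‖ * ‖T (WithLp.toLp 2 v)‖ := real_inner_le_norm _ _
    _ ≤ ‖WithLp.toLp 2 v‖ * (‖T‖ * ‖WithLp.toLp 2 v‖) := by gcongr; exact T.le_opNorm _
    _ = opNorm P * ‖WithLp.toLp (2 : ENNReal) v‖ ^ 2 := by rw [opNorm]; ring

theorem mul_enorm_sq_le_dotProduct_mulVec {n : ℕ} {P : Matrix (Fin n) (Fin n) ℝ} {γ : ℝ}
    (hPγ : ∀ z : Fin n → ℝ, z ≠ 0 → 0 < z ⬝ᵥ (P - γ • (1 : Matrix (Fin n) (Fin n) ℝ)) *ᵥ z)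
    (v : Fin n → ℝ) : γ * _root_.enorm v ^ 2 ≤ v ⬝ᵥ P *ᵥ v := by
  rcases eq_or_ne v 0 with rfl | hv
  · simp [enorm_sq]
  · have := hPγ v hv
    rw [sub_mulVec, smul_mulVec, one_mulVec, dotProduct_sub, dotProduct_smul, smul_eq_mul]
      at this
    rw [enorm_sq]
    linarith

theorem limsup_le_sqrt_of_sq_le {α : Type*} {l : Filter α} [l.NeBot] {u v : α → ℝ} {L : ℝ}
    (hu : ∀ a, 0 ≤ u a) (huv : ∀ᶠ a in l, u a ^ 2 ≤ v a) (hv : Tendsto v l (nhds L)) :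
    limsup u l ≤ √L := by
  have hsqrt : Tendsto (fun a => √(v a)) l (nhds √L) := hv.sqrt
  calc limsup u l ≤ limsup (fun a => √(v a)) l :=
        limsup_le_limsup (huv.mono fun a h => (le_abs_self _).trans (abs_le_sqrt h))
          (isCoboundedUnder_le_of_le l hu) hsqrt.isBoundedUnder_le
    _ = √L := hsqrt.limsup_eq

theorem NegDefQF.dotProduct_mulVec_nonpos {m : Type*} [Fintype m] {M : Matrix m m ℝ}
    (hM : NegDefQF M) (z : m → ℝ) : z ⬝ᵥ M *ᵥ z ≤ 0 := by
  rcases eq_or_ne z 0 with rfl | hz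
  · simp
  · exact (hM z hz).le

theorem NegDefQF.add_smul_of_mem_Icc {m : Type*} [Fintype m] {M N : Matrix m m ℝ}
    {ρ₀ ρ₁ ρ : ℝ} (h₀ : NegDefQF (M + ρ₀ • N)) (h₁ : NegDefQF (M + ρ₁ • N))
    (hρ : ρ ∈ Icc ρ₀ ρ₁) : NegDefQF (M + ρ • N) := by
  intro z hz
  have hz₀ := h₀ z hz
  have hz₁ := h₁ z hz
  simp only [add_mulVec, smul_mulVec, dotProduct_add, dotProduct_smul, smul_eq_mul]
    at hz₀ hz₁ ⊢
  rcases le_total 0 (z ⬝ᵥ N *ᵥ z) with hN | hN <;> nlinarith [hρ.1, hρ.2]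

section LyapunovLMI

variable {m k : Type*} [Fintype m] [DecidableEq k]

def lyapunovLMI (C : Matrix m m ℝ) (D : Matrix m k ℝ) (P : Matrix m m ℝ) (τ χ : ℝ) :
    Matrix (m ⊕ k) (m ⊕ k) ℝ :=
  fromBlocks (Cᵀ * P + P * C + τ • P) (P * D) (Dᵀ * P) ((-χ) • 1)

theorem lyapunovLMI_add_smul (A E : Matrix m m ℝ) (D : Matrix m k ℝ) (P : Matrix m m ℝ)
    (τ χ ρ : ℝ) :
    lyapunovLMI (A + ρ • E) D P τ χ =
      lyapunovLMI A D P τ χ + ρ • fromBlocks (Eᵀ * P + P * E) 0 0 0 := by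
  rw [lyapunovLMI, lyapunovLMI, fromBlocks_smul, fromBlocks_add]
  congr 1 <;> simp only [transpose_add, transpose_smul, add_mul, mul_add, smul_mul_assoc,
    mul_smul_comm, smul_add, smul_zero, add_zero]
  abel

theorem dotProduct_lyapunovLMI_mulVec [Fintype k] (C : Matrix m m ℝ) (D : Matrix m k ℝ)
    (P : Matrix m m ℝ) (τ χ : ℝ) (ξ : m → ℝ) (u : k → ℝ) :
    Sum.elim ξ u ⬝ᵥ lyapunovLMI C D P τ χ *ᵥ Sum.elim ξ u =
      (C *ᵥ ξ + D *ᵥ u) ⬝ᵥ P *ᵥ ξ + ξ ⬝ᵥ P *ᵥ (C *ᵥ ξ + D *ᵥ u) + τ * (ξ ⬝ᵥ P *ᵥ ξ)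
        - χ * (u ⬝ᵥ u) := by
  rw [lyapunovLMI, fromBlocks_mulVec, dotProduct_block]
  simp only [Sum.elim_comp_inl, Sum.elim_comp_inr]
  have hC : ξ ⬝ᵥ Cᵀ *ᵥ (P *ᵥ ξ) = (C *ᵥ ξ) ⬝ᵥ P *ᵥ ξ := by
    rw [dotProduct_mulVec, vecMul_transpose]
  have hD : u ⬝ᵥ Dᵀ *ᵥ (P *ᵥ ξ) = (D *ᵥ u) ⬝ᵥ P *ᵥ ξ := by
    rw [dotProduct_mulVec, vecMul_transpose]
  simp only [add_mulVec, smul_mulVec, mulVec_add, dotProduct_add, add_dotProduct,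
    dotProduct_smul, ← mulVec_mulVec, smul_eq_mul, neg_smul, neg_mulVec, one_mulVec,
    dotProduct_neg, hC, hD]
  ring

theorem NegDefQF.lyapunov_dissipation [Fintype k] {C : Matrix m m ℝ} {D : Matrix m k ℝ}
    {P : Matrix m m ℝ} {τ χ : ℝ} (h : NegDefQF (lyapunovLMI C D P τ χ)) (ξ : m → ℝ)
    (u : k → ℝ) :
    (C *ᵥ ξ + D *ᵥ u) ⬝ᵥ P *ᵥ ξ + ξ ⬝ᵥ P *ᵥ (C *ᵥ ξ + D *ᵥ u) + τ * (ξ ⬝ᵥ P *ᵥ ξ)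
      ≤ χ * (u ⬝ᵥ u) := by
  have := h.dotProduct_mulVec_nonpos (Sum.elim ξ u)
  rw [dotProduct_lyapunovLMI_mulVec] at this
  linarith

end LyapunovLMI

theorem exists_slope_of_sector {φ : ℝ → ℝ} {ρ₀ ρ₁ w : ℝ} (hφ0 : φ 0 = 0) (hρ : ρ₀ ≤ ρ₁)
    (h₀ : ρ₀ * w ^ 2 ≤ φ w * w) (h₁ : φ w * w ≤ ρ₁ * w ^ 2) :
    ∃ ρ ∈ Icc ρ₀ ρ₁, φ w = ρ * w := by
  rcases eq_or_ne w 0 with rfl | hw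
  · exact ⟨ρ₀, ⟨le_rfl, hρ⟩, by rw [hφ0, mul_zero]⟩
  · have hw2 : 0 < w ^ 2 := by positivity
    have hslope : φ w * w = φ w / w * w ^ 2 := by field_simp
    refine ⟨φ w / w, ⟨?_, ?_⟩, by field_simp⟩
    · exact le_of_mul_le_mul_right (h₀.trans_eq hslope) hw2
    · exact le_of_mul_le_mul_right (hslope ▸ h₁) hw2

theorem mul_mulVec_of_fin_one {m n : Type*} [Fintype n] (B : Matrix m (Fin 1) ℝ)
    (K : Matrix (Fin 1) n ℝ) (ξ : n → ℝ) :
    (B * K) *ᵥ ξ = fun i => B i 0 * ∑ j, K 0 j * ξ j := by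
  ext i
  simp only [mulVec, _root_.dotProduct, mul_apply, Fin.sum_univ_one, Finset.mul_sum,
    mul_assoc]

theorem closedLoop_dissipation {n l : ℕ} {A : Matrix (Fin n) (Fin n) ℝ}
    {B : Matrix (Fin n) (Fin 1) ℝ} {K : Matrix (Fin 1) (Fin n) ℝ} {D : Matrix (Fin n) (Fin l) ℝ}
    {P : Matrix (Fin n) (Fin n) ℝ} {φ : ℝ → ℝ} {ρ₀ ρ₁ τ χ : ℝ} (hφ0 : φ 0 = 0)
    (hρ : ρ₀ ≤ ρ₁) (h₀ : NegDefQF (lyapunovLMI (A + ρ₀ • (B * K)) D P τ χ))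
    (h₁ : NegDefQF (lyapunovLMI (A + ρ₁ • (B * K)) D P τ χ)) (ξ : Fin n → ℝ)
    (u : Fin l → ℝ)
    (hsector : ρ₀ * (∑ j, K 0 j * ξ j) ^ 2 ≤ φ (∑ j, K 0 j * ξ j) * (∑ j, K 0 j * ξ j) ∧
      φ (∑ j, K 0 j * ξ j) * (∑ j, K 0 j * ξ j) ≤ ρ₁ * (∑ j, K 0 j * ξ j) ^ 2) :
    let ξ' := A *ᵥ ξ + (fun i => B i 0 * φ (∑ j, K 0 j * ξ j)) + D *ᵥ u
    ξ' ⬝ᵥ P *ᵥ ξ + ξ ⬝ᵥ P *ᵥ ξ' + τ * (ξ ⬝ᵥ P *ᵥ ξ) ≤ χ * (u ⬝ᵥ u) := by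
  obtain ⟨ρ, hρ_mem, hφρ⟩ := exists_slope_of_sector hφ0 hρ hsector.1 hsector.2
  have hlinear : A *ᵥ ξ + (fun i => B i 0 * φ (∑ j, K 0 j * ξ j)) =
      (A + ρ • (B * K)) *ᵥ ξ := by
    rw [add_mulVec, smul_mulVec, mul_mulVec_of_fin_one, hφρ]
    ext i
    simp only [Pi.add_apply, Pi.smul_apply, smul_eq_mul]
    ring
  have hLMI : NegDefQF (lyapunovLMI (A + ρ • (B * K)) D P τ χ) := by
    simp only [lyapunovLMI_add_smul] at h₀ h₁ ⊢
    exact h₀.add_smul_of_mem_Icc h₁ hρ_mem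
  simpa only [hlinear] using hLMI.lyapunov_dissipation ξ u

theorem stmt_9_general (n l : ℕ)
    (A : Matrix (Fin n) (Fin n) ℝ) (B : Matrix (Fin n) (Fin 1) ℝ)
    (K : Matrix (Fin 1) (Fin n) ℝ) (D : Matrix (Fin n) (Fin l) ℝ)
    (φ : ℝ → ℝ) (hodd : ∀ s, φ (-s) = -φ s)
    (ρ₀ ρ₁ τ χ γ fbar : ℝ) (hρ : ρ₀ ≤ ρ₁)
    (hτ : 0 < τ) (hχ : 0 < χ) (hγ : 0 < γ) (hf : 0 ≤ fbar)
    (P : Matrix (Fin n) (Fin n) ℝ)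
    (hPγ : ∀ z : Fin n → ℝ, z ≠ 0 →
      0 < z ⬝ᵥ (P - γ • (1 : Matrix (Fin n) (Fin n) ℝ)) *ᵥ z)
    (hvertex : ∀ ρ : ℝ, ρ = ρ₀ ∨ ρ = ρ₁ →
      NegDefQF (Matrix.fromBlocks
        ((A + ρ • (B * K))ᵀ * P + P * (A + ρ • (B * K)) + τ • P)
        (P * D) (Dᵀ * P) ((-χ) • (1 : Matrix (Fin l) (Fin l) ℝ))))
    (f : ℝ → Fin l → ℝ) (hfb : ∀ t ≥ (0 : ℝ), ∑ i, (f t i) ^ 2 ≤ fbar)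
    (x : ℝ → Fin n → ℝ)
    (hx : ∀ t ≥ (0 : ℝ), HasDerivAt x
      (A *ᵥ x t + (fun i => B i 0 * φ (∑ j, K 0 j * x t j)) + D *ᵥ f t) t)
    (hsector : ∀ t ≥ (0 : ℝ),
      ρ₀ * (∑ j, K 0 j * x t j) ^ 2 ≤ φ (∑ j, K 0 j * x t j) * (∑ j, K 0 j * x t j) ∧
      φ (∑ j, K 0 j * x t j) * (∑ j, K 0 j * x t j) ≤ ρ₁ * (∑ j, K 0 j * x t j) ^ 2) :
    (∀ t ≥ (0 : ℝ),
      x t ⬝ᵥ P *ᵥ x t ≤ χ * fbar / τ +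
        (opNorm P * (_root_.enorm (x 0)) ^ 2 + χ * fbar / τ) * Real.exp (-τ * t)) ∧
    limsup (fun t => _root_.enorm (x t)) atTop ≤ Real.sqrt (χ * fbar / (γ * τ)) := by
  have hφ0 : φ 0 = 0 := by linarith [neg_zero (G := ℝ) ▸ hodd 0]
  have hdiss : ∀ t ≥ (0 : ℝ), _ + τ * (x t ⬝ᵥ P *ᵥ x t) ≤ χ * fbar := fun t ht =>
    (closedLoop_dissipation hφ0 hρ (hvertex ρ₀ (.inl rfl)) (hvertex ρ₁ (.inr rfl)) (x t) (f t)
      (hsector t ht)).trans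
      (mul_le_mul_of_nonneg_left (by simpa only [_root_.dotProduct, sq] using hfb t ht) hχ.le)
  have hbound : ∀ t ≥ (0 : ℝ), x t ⬝ᵥ P *ᵥ x t ≤ χ * fbar / τ +
      (opNorm P * _root_.enorm (x 0) ^ 2 + χ * fbar / τ) * exp (-τ * t) := by
    intro t ht
    have hV := le_of_hasDerivAt_add_mul_le hτ.ne'
      (fun s hs => (hx s hs).dotProduct ((hx s hs).mulVec P)) hdiss t ht
    nlinarith [dotProduct_mulVec_le_opNorm_mul_enorm_sq P (x 0), exp_pos (-τ * t),
      div_nonneg (mul_nonneg hχ.le hf) hτ.le]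
  refine ⟨hbound, limsup_le_sqrt_of_sq_le (v := fun t => (χ * fbar / τ +
      (opNorm P * _root_.enorm (x 0) ^ 2 + χ * fbar / τ) * exp (-τ * t)) / γ)
    (fun t => sqrt_nonneg _) ?_ ?_⟩
  · filter_upwards [eventually_ge_atTop 0] with t ht
    rw [le_div_iff₀' hγ]
    exact (mul_enorm_sq_le_dotProduct_mulVec hPγ (x t)).trans (hbound t ht)
  · have hexp : Tendsto (fun t => exp (-τ * t)) atTop (nhds 0) := by
      simpa only [neg_mul, Function.comp_def, id] using
        tendsto_exp_neg_atTop_nhds_zero.comp (tendsto_id.const_mul_atTop hτ)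
    convert ((hexp.const_mul _).const_add (χ * fbar / τ)).div_const γ using 2
    rw [mul_zero, add_zero, div_div, mul_comm γ]

/-- Theorem 2, single cell: for the closed loop
`x' = Ax + Bφ(Σⱼ kⱼ xⱼ) + Df` with the sector condition
`ρ₀ w² ≤ φ(w)w ≤ ρ₁ w²` along the trajectory (`w = Σⱼ kⱼ xⱼ`), and the LMI
satisfied at `ρ ∈ {ρ₀, ρ₁}`, the Lyapunov function `V = xᵀPx` obeys the
exponential bound, and `limsup |x(t)| ≤ √(χf̄/(γτ))`. -/
theorem stmt_9 (n l : ℕ) (hn : 0 < n) (hl : 0 < l)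
    (A : Matrix (Fin n) (Fin n) ℝ) (B : Matrix (Fin n) (Fin 1) ℝ)
    (K : Matrix (Fin 1) (Fin n) ℝ) (D : Matrix (Fin n) (Fin l) ℝ)
    (φ : ℝ → ℝ) (hodd : ∀ s, φ (-s) = -φ s)
    (ρ₀ ρ₁ τ χ γ fbar : ℝ) (hρ₀ : 0 ≤ ρ₀) (hρ : ρ₀ ≤ ρ₁)
    (hτ : 0 < τ) (hχ : 0 < χ) (hγ : 0 < γ) (hf : 0 ≤ fbar)
    (P : Matrix (Fin n) (Fin n) ℝ) (hPsymm : P.IsSymm)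
    (hPγ : ∀ z : Fin n → ℝ, z ≠ 0 →
      0 < z ⬝ᵥ (P - γ • (1 : Matrix (Fin n) (Fin n) ℝ)) *ᵥ z)
    (hvertex : ∀ ρ : ℝ, ρ = ρ₀ ∨ ρ = ρ₁ →
      NegDefQF (Matrix.fromBlocks
        ((A + ρ • (B * K))ᵀ * P + P * (A + ρ • (B * K)) + τ • P)
        (P * D) (Dᵀ * P) ((-χ) • (1 : Matrix (Fin l) (Fin l) ℝ))))
    (f : ℝ → Fin l → ℝ) (hfb : ∀ t ≥ (0 : ℝ), ∑ i, (f t i) ^ 2 ≤ fbar)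
    (x : ℝ → Fin n → ℝ)
    (hx : ∀ t ≥ (0 : ℝ), HasDerivAt x
      (A *ᵥ x t + (fun i => B i 0 * φ (∑ j, K 0 j * x t j)) + D *ᵥ f t) t)
    (hsector : ∀ t ≥ (0 : ℝ),
      ρ₀ * (∑ j, K 0 j * x t j) ^ 2 ≤ φ (∑ j, K 0 j * x t j) * (∑ j, K 0 j * x t j) ∧
      φ (∑ j, K 0 j * x t j) * (∑ j, K 0 j * x t j) ≤ ρ₁ * (∑ j, K 0 j * x t j) ^ 2) :
    (∀ t ≥ (0 : ℝ),
      x t ⬝ᵥ P *ᵥ x t ≤ χ * fbar / τ +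
        (opNorm P * (_root_.enorm (x 0)) ^ 2 + χ * fbar / τ) * Real.exp (-τ * t)) ∧
    limsup (fun t => _root_.enorm (x t)) atTop ≤ Real.sqrt (χ * fbar / (γ * τ)) :=
  stmt_9_general n l A B K D φ hodd ρ₀ ρ₁ τ χ γ fbar hρ hτ hχ hγ hf P hPγ hvertex f hfb x hx hsector
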